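/- Let m ≥ 2, let b be a distinguished index among {1,…,m}, and let 0 < α < 1. For each i, let J_i* be the maximum of N_i i.i.d. random variables uniform on [c_i, d_i], all samples mutually independent, where for every i ≠ b one has N_i ≤ N_b, c_i ≤ c_b (with c_i < d_i, c_b < d_b) and d_i = c_b + α(d_b − c_b) with c_b < d_i ≤ d_b. If N_b ≥ T/(r·m) for reals T, r, m > 0, then the probability P_b that J_b* is at least every other J_i* satisfies P_b ≥ 1 − (1/2)(m − 1)·α^{T/(r·m)}. -/

import Mathlib

/-!
The event `J_b* < J_i*` involves only the independent coordinates `b` and `i`, so its probability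
is `∫ P(J_b* < x) dL_i(x)`, where `L_i` is the law of `J_i*`. Below `d_i` the distribution
function of the uniform law on `[c_b, d_b]` is at most `α` times that of the uniform law on
`[c_i, d_i]`; as `N_i ≤ N_b`, this gives `P(J_b* < x) ≤ α^{N_b} P(J_i* < x)` on the support of
`L_i`, hence `P(J_b* < J_i*) ≤ α^{N_b} P(J_i' < J_i*) ≤ α^{N_b} / 2` for an independent copy
`J_i'` of `J_i*`, by symmetry. A union bound over the `m - 1` indices `i ≠ b` and
`α^{N_b} ≤ α^{T/(rm)}` finish the proof.
-/
open MeasureTheory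

/-- The uniform probability distribution on the interval `[c, d]`. -/
noncomputable def uniformIcc (c d : ℝ) : Measure ℝ :=
  (ENNReal.ofReal (d - c))⁻¹ • volume.restrict (Set.Icc c d)

open ProbabilityTheory Set

section Order

variable {α : Type*} [MeasurableSpace α] [TopologicalSpace α] [LinearOrder α]
  [OrderClosedTopology α] [SecondCountableTopology α] [OpensMeasurableSpace α]

theorem prod_self_setOf_lt_le_half (μ : Measure α) [IsProbabilityMeasure μ] :
    μ.prod μ {p | p.1 < p.2} ≤ 1 / 2 := by
  have hmeas : MeasurableSet {p : α × α | p.2 < p.1} :=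
    measurableSet_lt measurable_snd measurable_fst
  have hswap : μ.prod μ {p | p.2 < p.1} = μ.prod μ {p | p.1 < p.2} := by
    conv_rhs => rw [← Measure.prod_swap]
    rw [Measure.map_apply measurable_swap (measurableSet_lt measurable_fst measurable_snd)]
    rfl
  have hdisj : Disjoint {p : α × α | p.1 < p.2} {p | p.2 < p.1} :=
    disjoint_left.2 fun _ h h' => lt_asymm h h'
  have htwice : 2 * μ.prod μ {p | p.1 < p.2} ≤ 1 := by
    rw [two_mul]
    nth_rewrite 2 [← hswap]
    rw [← measure_union hdisj hmeas]
    exact prob_le_one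
  rwa [ENNReal.le_div_iff_mul_le (Or.inl two_ne_zero) (Or.inl ENNReal.ofNat_ne_top), mul_comm]

theorem prod_setOf_lt_le_mul_of_ae {μ ν ρ : Measure α} [SFinite μ] [SFinite ν] [SFinite ρ]
    {k : ENNReal} (h : ∀ᵐ x ∂ρ, μ (Iio x) ≤ k * ν (Iio x)) :
    μ.prod ρ {p | p.1 < p.2} ≤ k * ν.prod ρ {p | p.1 < p.2} := by
  have hmeas : MeasurableSet {p : α × α | p.1 < p.2} :=
    measurableSet_lt measurable_fst measurable_snd
  rw [Measure.prod_apply_symm hmeas, Measure.prod_apply_symm hmeas,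
    ← lintegral_const_mul _ (measurable_measure_prodMk_right hmeas)]
  exact lintegral_mono_ae h

theorem pi_setOf_lt_eq_prod_map {ι : Type*} [Fintype ι] {Ω : ι → Type*}
    [∀ i, MeasurableSpace (Ω i)] (μ : ∀ i, Measure (Ω i)) [∀ i, IsProbabilityMeasure (μ i)]
    {X : ∀ i, Ω i → α} (hX : ∀ i, Measurable (X i)) {i j : ι} (hij : i ≠ j) :
    Measure.pi μ {ω | X i (ω i) < X j (ω j)} =
      ((μ i).map (X i)).prod ((μ j).map (X j)) {p | p.1 < p.2} := by
  have hXω : ∀ k, Measurable fun ω : ∀ k, Ω k => X k (ω k) :=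
    fun k => (hX k).comp (measurable_pi_apply k)
  have hlaw : ∀ k, (Measure.pi μ).map (fun ω => X k (ω k)) = (μ k).map (X k) := fun k => by
    rw [← (measurePreserving_eval μ k).map_eq, Measure.map_map (hX k) (measurable_pi_apply k)]
    rfl
  have hind := (iIndepFun_pi (μ := μ) fun k => (hX k).aemeasurable).indepFun hij
  rw [← hlaw i, ← hlaw j,
    ← hind.map_prod_eq_prod_map_map (hXω i).aemeasurable (hXω j).aemeasurable,
    Measure.map_apply ((hXω i).prodMk (hXω j)) (measurableSet_lt measurable_fst measurable_snd)]
  rfl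

end Order

theorem ofReal_one_sub_card_mul_le_measure {Ω ι : Type*} [MeasurableSpace Ω] {μ : Measure Ω}
    [IsProbabilityMeasure μ] (s : Finset ι) {A : ι → Set Ω} {E : Set Ω}
    (hE : Eᶜ ⊆ ⋃ i ∈ s, A i) {p : ℝ} (hA : ∀ i ∈ s, μ (A i) ≤ ENNReal.ofReal p) (hp : 0 ≤ p) :
    ENNReal.ofReal (1 - s.card * p) ≤ μ E := by
  have hcompl : μ Eᶜ ≤ ENNReal.ofReal (s.card * p) :=
    calc μ Eᶜ ≤ ∑ i ∈ s, μ (A i) := (measure_mono hE).trans (measure_biUnion_finset_le _ _)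
      _ ≤ ∑ _i ∈ s, ENNReal.ofReal p := Finset.sum_le_sum hA
      _ = ENNReal.ofReal (s.card * p) := by
        rw [Finset.sum_const, nsmul_eq_mul, ENNReal.ofReal_mul (Nat.cast_nonneg _),
          ENNReal.ofReal_natCast]
  calc ENNReal.ofReal (1 - s.card * p) = 1 - ENNReal.ofReal (s.card * p) := by
        rw [ENNReal.ofReal_sub _ (by positivity), ENNReal.ofReal_one]
    _ ≤ 1 - μ Eᶜ := tsub_le_tsub_left hcompl 1
    _ ≤ μ E := by
        rw [tsub_le_iff_right, ← measure_univ (μ := μ), ← union_compl_self E]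
        exact measure_union_le _ _

theorem isProbabilityMeasure_uniformIcc {c d : ℝ} (h : c < d) :
    IsProbabilityMeasure (uniformIcc c d) := by
  constructor
  rw [uniformIcc, Measure.smul_apply, Measure.restrict_apply_univ, Real.volume_Icc, smul_eq_mul]
  exact ENNReal.inv_mul_cancel (by simpa using h) ENNReal.ofReal_ne_top

theorem ae_le_uniformIcc (c d : ℝ) : ∀ᵐ x ∂uniformIcc c d, x ≤ d :=
  Measure.ae_smul_measure ((ae_restrict_mem measurableSet_Icc).mono fun _ hx => hx.2) _

theorem uniformIcc_Iio {c d x : ℝ} (h : c < d) (hx : x ≤ d) :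
    uniformIcc c d (Iio x) = ENNReal.ofReal ((x - c) / (d - c)) := by
  have hinter : Iio x ∩ Icc c d = Ico c x := by
    ext y
    simp only [mem_inter_iff, mem_Iio, mem_Icc, mem_Ico]
    constructor
    · rintro ⟨hyx, hcy, -⟩
      exact ⟨hcy, hyx⟩
    · rintro ⟨hcy, hyx⟩
      exact ⟨hyx, hcy, hyx.le.trans hx⟩
  rw [uniformIcc, Measure.smul_apply, Measure.restrict_apply measurableSet_Iio, hinter,
    Real.volume_Ico, smul_eq_mul, ENNReal.ofReal_div_of_pos (sub_pos.2 h), ENNReal.div_eq_inv_mul]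

theorem sub_div_sub_le_mul_sub_div_sub {c c' d d' α x : ℝ} (hcd : c < d) (hcd' : c' < d')
    (hc : c' ≤ c) (hd' : d' = c + α * (d - c)) (hx : x ≤ d') :
    (x - c) / (d - c) ≤ α * ((x - c') / (d' - c')) := by
  have hα : α = (d' - c) / (d - c) := by
    rw [eq_div_iff (sub_pos.2 hcd).ne']
    linarith
  rw [hα, div_mul_div_comm, div_le_div_iff₀ (sub_pos.2 hcd) (by nlinarith)]
  -- after clearing denominators the claim is `(c - c') * (d' - x) ≥ 0`
  nlinarith [mul_nonneg (sub_nonneg.2 hc) (sub_nonneg.2 hx), sub_pos.2 hcd]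

noncomputable def maxLaw (n : ℕ) (μ : Measure ℝ) : Measure ℝ :=
  (Measure.pi fun _ : Fin n => μ).map fun v => ⨆ j, v j

theorem measurable_iSup_fin (n : ℕ) : Measurable fun v : Fin n → ℝ => ⨆ j, v j :=
  Measurable.iSup fun j => measurable_pi_apply j

instance {n : ℕ} {μ : Measure ℝ} [IsProbabilityMeasure μ] : IsProbabilityMeasure (maxLaw n μ) :=
  Measure.isProbabilityMeasure_map (measurable_iSup_fin n).aemeasurable

theorem maxLaw_Iio {n : ℕ} (hn : 0 < n) (μ : Measure ℝ) [SigmaFinite μ] (x : ℝ) :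
    maxLaw n μ (Iio x) = μ (Iio x) ^ n := by
  have : Nonempty (Fin n) := ⟨⟨0, hn⟩⟩
  have hpre : (fun v : Fin n → ℝ => ⨆ j, v j) ⁻¹' Iio x = univ.pi fun _ => Iio x := by
    ext v
    obtain ⟨j₀, hj₀⟩ := exists_eq_ciSup_of_finite (f := v)
    simp only [mem_preimage, mem_Iio, mem_univ_pi, ← hj₀]
    exact ⟨fun h j => (le_ciSup (finite_range v).bddAbove j).trans_lt (hj₀ ▸ h), fun h => h j₀⟩
  rw [maxLaw, Measure.map_apply (measurable_iSup_fin n) measurableSet_Iio, hpre, Measure.pi_pi,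
    Finset.prod_const, Finset.card_univ, Fintype.card_fin]

theorem ae_le_maxLaw {n : ℕ} (hn : 0 < n) {μ : Measure ℝ} [SigmaFinite μ] {d : ℝ}
    (h : ∀ᵐ x ∂μ, x ≤ d) : ∀ᵐ x ∂maxLaw n μ, x ≤ d := by
  have : Nonempty (Fin n) := ⟨⟨0, hn⟩⟩
  rw [maxLaw, ae_map_iff (measurable_iSup_fin n).aemeasurable measurableSet_Iic]
  have hcoord : ∀ᵐ v ∂Measure.pi fun _ : Fin n => μ, ∀ j, v j ≤ d :=
    ae_all_iff.2 fun j =>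
      (Measure.tendsto_eval_ae_ae (μ := fun _ : Fin n => μ) (i := j)).eventually h
  filter_upwards [hcoord] with v hv using ciSup_le hv

theorem uniformIcc_Iio_le_mul {c c' d d' α x : ℝ} (hα : 0 ≤ α) (hcd : c < d) (hcd' : c' < d')
    (hc : c' ≤ c) (hd' : d' = c + α * (d - c)) (hdd : d' ≤ d) (hx : x ≤ d') :
    uniformIcc c d (Iio x) ≤ ENNReal.ofReal α * uniformIcc c' d' (Iio x) := by
  rw [uniformIcc_Iio hcd (hx.trans hdd), uniformIcc_Iio hcd' hx, ← ENNReal.ofReal_mul hα]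
  exact ENNReal.ofReal_le_ofReal (sub_div_sub_le_mul_sub_div_sub hcd hcd' hc hd' hx)

theorem maxLaw_uniformIcc_prod_setOf_lt_le {n n' : ℕ} (hn' : 0 < n') (hnn : n' ≤ n)
    {c c' d d' α : ℝ} (hα : 0 ≤ α) (hcd : c < d) (hcd' : c' < d') (hc : c' ≤ c)
    (hd' : d' = c + α * (d - c)) (hdd : d' ≤ d) :
    (maxLaw n (uniformIcc c d)).prod (maxLaw n' (uniformIcc c' d')) {p | p.1 < p.2} ≤
      ENNReal.ofReal α ^ n / 2 := by
  have := isProbabilityMeasure_uniformIcc hcd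
  have := isProbabilityMeasure_uniformIcc hcd'
  have hcdf : ∀ᵐ x ∂maxLaw n' (uniformIcc c' d'), maxLaw n (uniformIcc c d) (Iio x) ≤
      ENNReal.ofReal α ^ n * maxLaw n' (uniformIcc c' d') (Iio x) := by
    filter_upwards [ae_le_maxLaw hn' (ae_le_uniformIcc c' d')] with x hx
    rw [maxLaw_Iio (hn'.trans_le hnn), maxLaw_Iio hn']
    calc uniformIcc c d (Iio x) ^ n ≤ (ENNReal.ofReal α * uniformIcc c' d' (Iio x)) ^ n := by
          gcongr
          exact uniformIcc_Iio_le_mul hα hcd hcd' hc hd' hdd hx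
      _ = ENNReal.ofReal α ^ n * uniformIcc c' d' (Iio x) ^ n := mul_pow _ _ _
      _ ≤ ENNReal.ofReal α ^ n * uniformIcc c' d' (Iio x) ^ n' :=
          mul_le_mul_right (pow_le_pow_right_of_le_one' prob_le_one hnn) _
  calc _ ≤ ENNReal.ofReal α ^ n *
        (maxLaw n' (uniformIcc c' d')).prod (maxLaw n' (uniformIcc c' d')) {p | p.1 < p.2} :=
        prod_setOf_lt_le_mul_of_ae hcdf
    _ ≤ ENNReal.ofReal α ^ n * (1 / 2) := by
        gcongr
        exact prod_self_setOf_lt_le_half _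
    _ = ENNReal.ofReal α ^ n / 2 := mul_one_div _ _

theorem stmt8_general (m : ℕ) (b : Fin m)
    (N : Fin m → ℕ) (c d : Fin m → ℝ) (α : ℝ) (hα : α ∈ Set.Ioo (0 : ℝ) 1)
    (hN : ∀ i, 0 < N i) (hcd : ∀ i, c i < d i)
    (hNle : ∀ i, i ≠ b → N i ≤ N b)
    (hcc : ∀ i, i ≠ b → c i ≤ c b)
    (hdα : ∀ i, i ≠ b → d i = c b + α * (d b - c b))
    (hdd : ∀ i, i ≠ b → d i ≤ d b)
    (T r : ℝ)
    (hNb : T / (r * m) ≤ (N b : ℝ)) :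
    ENNReal.ofReal (1 - (1 / 2) * ((m : ℝ) - 1) * α ^ (T / (r * (m : ℝ)))) ≤
      (Measure.pi fun i : Fin m =>
          Measure.pi fun _ : Fin (N i) => uniformIcc (c i) (d i))
        {ω : ∀ i : Fin m, Fin (N i) → ℝ |
          ∀ i, i ≠ b → (⨆ j, ω i j) ≤ ⨆ j, ω b j} := by
  have := fun i => isProbabilityMeasure_uniformIcc (hcd i)
  set t := T / (r * (m : ℝ))
  have hpair : ∀ i ∈ Finset.univ.erase b,
      (Measure.pi fun i : Fin m => Measure.pi fun _ : Fin (N i) => uniformIcc (c i) (d i))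
        {ω | (⨆ j, ω b j) < ⨆ j, ω i j} ≤ ENNReal.ofReal (α ^ t / 2) := by
    intro i hi
    have hib := (Finset.mem_erase.1 hi).1
    rw [pi_setOf_lt_eq_prod_map _ (fun k => measurable_iSup_fin (N k)) hib.symm]
    refine (maxLaw_uniformIcc_prod_setOf_lt_le (hN i) (hNle i hib) hα.1.le (hcd b) (hcd i)
      (hcc i hib) (hdα i hib) (hdd i hib)).trans ?_
    rw [← ENNReal.ofReal_pow hα.1.le, ENNReal.ofReal_div_of_pos two_pos, ENNReal.ofReal_ofNat]
    gcongr
    rw [← Real.rpow_natCast]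
    exact Real.rpow_le_rpow_of_exponent_ge hα.1 hα.2.le hNb
  have hcover : {ω : ∀ i : Fin m, Fin (N i) → ℝ | ∀ i, i ≠ b → (⨆ j, ω i j) ≤ ⨆ j, ω b j}ᶜ ⊆
      ⋃ i ∈ Finset.univ.erase b, {ω | (⨆ j, ω b j) < ⨆ j, ω i j} := by
    intro ω hω
    obtain ⟨i, hib, hlt⟩ : ∃ i, i ≠ b ∧ (⨆ j, ω b j) < ⨆ j, ω i j := by simpa using hω
    exact mem_biUnion (Finset.mem_erase.2 ⟨hib, Finset.mem_univ i⟩) hlt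
  have hcard : ((Finset.univ.erase b).card : ℝ) = m - 1 := by
    rw [Finset.card_erase_of_mem (Finset.mem_univ b), Finset.card_univ, Fintype.card_fin,
      Nat.cast_sub b.pos, Nat.cast_one]
  calc ENNReal.ofReal (1 - 1 / 2 * ((m : ℝ) - 1) * α ^ t)
      = ENNReal.ofReal (1 - (Finset.univ.erase b).card * (α ^ t / 2)) := by
        rw [hcard]
        ring_nf
    _ ≤ _ := ofReal_one_sub_card_mul_le_measure _ hcover hpair
        (div_nonneg (Real.rpow_nonneg hα.1.le t) zero_le_two)

/-- If in addition `d_i = c_b + α(d_b − c_b)` for every `i ≠ b` with `0 < α < 1`,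
and the best start node receives at least `T/(r·m)` samples, then the
probability `P_b` that `J_b*` is at least every other `J_i*` satisfies
`P_b ≥ 1 − (1/2)(m − 1)·α^{T/(r·m)}`. -/
theorem stmt8 (m : ℕ) (hm : 2 ≤ m) (b : Fin m)
    (N : Fin m → ℕ) (c d : Fin m → ℝ) (α : ℝ) (hα : α ∈ Set.Ioo (0 : ℝ) 1)
    (hN : ∀ i, 0 < N i) (hcd : ∀ i, c i < d i)
    (hNle : ∀ i, i ≠ b → N i ≤ N b)
    (hcc : ∀ i, i ≠ b → c i ≤ c b)
    (hdα : ∀ i, i ≠ b → d i = c b + α * (d b - c b))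
    (hcbd : ∀ i, i ≠ b → c b < d i)
    (hdd : ∀ i, i ≠ b → d i ≤ d b)
    (T r : ℝ) (hT : 0 < T) (hr : 0 < r)
    (hNb : T / (r * m) ≤ (N b : ℝ)) :
    ENNReal.ofReal (1 - (1 / 2) * ((m : ℝ) - 1) * α ^ (T / (r * (m : ℝ)))) ≤
      (Measure.pi fun i : Fin m =>
          Measure.pi fun _ : Fin (N i) => uniformIcc (c i) (d i))
        {ω : ∀ i : Fin m, Fin (N i) → ℝ |
          ∀ i, i ≠ b → (⨆ j, ω i j) ≤ ⨆ j, ω b j} :=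
  stmt8_general m b N c d α hα hN hcd hNle hcc hdα hdd T r hNb
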